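/- If the 2×2 matrix ring M₂(R) over a ring R is GSWNC, then R is strongly weakly nil-clean. -/

import Mathlib

/-- An element is strongly weakly nil-clean. -/
def IsSWNC {R : Type*} [Ring R] (a : R) : Prop :=
  ∃ q e : R, IsNilpotent q ∧ IsIdempotentElem e ∧ Commute q e ∧ (a = q + e ∨ a = q - e)

/-- A ring is GSWNC if every non-unit is strongly weakly nil-clean. -/
def IsGSWNC (R : Type*) [Ring R] : Prop :=
  ∀ a : R, ¬ IsUnit a → IsSWNC a

/-!
The matrix `A = !![a, 1; 0, 0]` has a zero row, so it is not a unit and `A = Q ± E` for a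
nilpotent `Q` and an idempotent `E` commuting with each other. Then `Q` and `E` commute with `A`,
and every matrix commuting with `A` is upper triangular. On upper triangular matrices the
top-left entry is a ring homomorphism, and it carries `A = Q ± E` to `a = Q₀₀ ± E₀₀`.
-/

theorem Subring.mem_centralizer_singleton_iff {R : Type*} [Ring R] {a x : R} :
    x ∈ Subring.centralizer {a} ↔ Commute a x := by
  simp [Subring.mem_centralizer_iff, Commute, SemiconjBy]

theorem isSWNC_zero {R : Type*} [Ring R] : IsSWNC (0 : R) :=
  ⟨0, 0, IsNilpotent.zero, IsIdempotentElem.zero, Commute.zero_left 0, .inl (add_zero 0).symm⟩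

theorem IsSWNC.map {R S F : Type*} [Ring R] [Ring S] [FunLike F R S] [RingHomClass F R S]
    (f : F) {a : R} (ha : IsSWNC a) : IsSWNC (f a) := by
  obtain ⟨q, e, hq, he, hqe, rfl | rfl⟩ := ha
  · exact ⟨f q, f e, hq.map f, he.map f, hqe.map f, .inl (map_add f q e)⟩
  · exact ⟨f q, f e, hq.map f, he.map f, hqe.map f, .inr (map_sub f q e)⟩

theorem IsSWNC.centralizer {R : Type*} [Ring R] {a : R} (ha : IsSWNC a) :
    IsSWNC (⟨a, Subring.mem_centralizer_singleton_iff.2 (.refl a)⟩ :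
      Subring.centralizer {a}) := by
  obtain ⟨q, e, hq, he, hqe, hsum⟩ := ha
  have commute_a : ∀ x, Commute q x → Commute e x → Commute a x := by
    rcases hsum with rfl | rfl
    exacts [fun x hq he => hq.add_left he, fun x hq he => hq.sub_left he]
  have hqC := Subring.mem_centralizer_singleton_iff.2 (commute_a q (.refl q) hqe.symm)
  have heC := Subring.mem_centralizer_singleton_iff.2 (commute_a e hqe (.refl e))
  refine ⟨⟨q, hqC⟩, ⟨e, heC⟩, ?_, Subtype.ext he, Subtype.ext hqe.eq, ?_⟩
  · exact (IsNilpotent.map_iff (Subring.centralizer {a}).subtype_injective).1 hq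
  · rcases hsum with h | h
    exacts [.inl (Subtype.ext h), .inr (Subtype.ext h)]

namespace Matrix

variable {R : Type*} [Ring R]

theorem not_isUnit_of_row_eq_zero {n : Type*} [Fintype n] [DecidableEq n] [Nontrivial R]
    {M : Matrix n n R} {i : n} (hi : M i = 0) : ¬ IsUnit M := by
  intro hu
  obtain ⟨B, hB⟩ := hu.exists_right_inv
  simpa [Matrix.mul_apply, hi] using congrFun (congrFun hB i) i

theorem apply_one_zero_eq_zero_of_commute {a : R} {X : Matrix (Fin 2) (Fin 2) R}
    (hX : Commute !![a, 1; 0, 0] X) : X 1 0 = 0 := by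
  simpa [Matrix.mul_apply, Fin.sum_univ_two] using (congrFun (congrFun hX.eq 1) 1).symm

def topLeftHom (a : R) : Subring.centralizer {!![a, 1; 0, 0]} →+* R where
  toFun X := (X : Matrix (Fin 2) (Fin 2) R) 0 0
  map_one' := rfl
  map_mul' X Y := by
    have hY := apply_one_zero_eq_zero_of_commute (Subring.mem_centralizer_singleton_iff.1 Y.2)
    simp [Matrix.mul_apply, Fin.sum_univ_two, hY]
  map_zero' := rfl
  map_add' _ _ := rfl

end Matrix

theorem stmt10 {R : Type*} [Ring R] (h : IsGSWNC (Matrix (Fin 2) (Fin 2) R)) :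
    ∀ a : R, IsSWNC a := by
  intro a
  cases subsingleton_or_nontrivial R
  · rw [Subsingleton.elim a 0]
    exact isSWNC_zero
  · have hA : ¬ IsUnit !![a, 1; 0, 0] :=
      Matrix.not_isUnit_of_row_eq_zero (i := 1) (by ext j; fin_cases j <;> rfl)
    exact (h _ hA).centralizer.map (Matrix.topLeftHom a)
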